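/- Dyadic covering lemma: for every T > 0, δ ∈ (0,T], and every interval [s,t] ⊆ [0,T] with t − s ≤ δ, the open interval (s,t) can be covered, without covering any points outside [s,t], by dyadic intervals of the form [(i−1)2^{-n}T, i2^{-n}T] with pairwise disjoint interiors, such that for some m ≥ 1 with 2^{-m}T ≤ δ there are at most two dyadic intervals of each length 2^{-i}T for i ≥ m and none of length greater than 2^{-m}T. -/

import Mathlib

/-- The dyadic interval `[(i-1) 2⁻ⁿ T, i 2⁻ⁿ T]` (relative to `T`). -/
noncomputable def dyadicInterval (T : ℝ) (n i : ℕ) : Set ℝ :=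
  Set.Icc (((i : ℝ) - 1) * 2 ^ (-(n : ℤ)) * T) ((i : ℝ) * 2 ^ (-(n : ℤ)) * T)

/-!
The cover consists of the maximal dyadic intervals of level at least one inside `[s, t]`.
Two dyadic intervals are nested or have disjoint interiors, and maximality excludes strict
nesting. Every `x ∈ (s, t)` lies in arbitrarily short dyadic intervals, hence in a maximal one.
Were there three maximal intervals of one level, the parent of the middle one would lie
between the outer two, hence inside `[s, t]`. Finally all of them have length at most
`t - s ≤ δ`, which bounds their levels from below.
-/

open Set Filter Topology

theorem Set.encard_le_two_of_forall_not_lt_lt {α : Type*} [LinearOrder α] {A : Set α}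
    (h : ∀ a ∈ A, ∀ b ∈ A, ∀ c ∈ A, a < b → ¬ b < c) : A.encard ≤ 2 := by
  by_contra! hA
  obtain ⟨B, hBA, hB⟩ := exists_subset_encard_eq (Order.add_one_le_of_lt hA)
  obtain ⟨x, y, z, hxy, hxz, hyz, rfl⟩ := encard_eq_three.1 hB
  have hx : x ∈ A := hBA (by simp)
  have hy : y ∈ A := hBA (by simp)
  have hz : z ∈ A := hBA (by simp)
  rcases hxy.lt_or_gt with h1 | h1 <;> rcases hxz.lt_or_gt with h2 | h2 <;>
    rcases hyz.lt_or_gt with h3 | h3 <;> grind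

section
variable {T : ℝ}

theorem zpow_neg_natCast_mul_eq_div {K : Type*} [Field K] (a b : K) (n : ℕ) :
    a ^ (-(n : ℤ)) * b = b / a ^ n := by
  rw [zpow_neg, zpow_natCast, inv_mul_eq_div]

theorem dyadicInterval_eq (T : ℝ) (n i : ℕ) :
    dyadicInterval T n i = Icc ((i - 1) * (T / 2 ^ n)) (i * (T / 2 ^ n)) := by
  simp only [dyadicInterval, mul_assoc, zpow_neg_natCast_mul_eq_div]

theorem left_mem_dyadicInterval (hT : 0 ≤ T) (n i : ℕ) :
    (i - 1) * (T / 2 ^ n) ∈ dyadicInterval T n i := by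
  rw [dyadicInterval_eq]
  exact left_mem_Icc.2 (by nlinarith [div_nonneg hT (pow_nonneg zero_le_two n)])

theorem right_mem_dyadicInterval (hT : 0 ≤ T) (n i : ℕ) :
    i * (T / 2 ^ n) ∈ dyadicInterval T n i := by
  rw [dyadicInterval_eq]
  exact right_mem_Icc.2 (by nlinarith [div_nonneg hT (pow_nonneg zero_le_two n)])

theorem div_two_pow_succ (T : ℝ) (n : ℕ) : T / 2 ^ n = 2 * (T / 2 ^ (n + 1)) := by
  rw [pow_succ]; field_simp

theorem dyadicInterval_subset_parent (hT : 0 ≤ T) (n j : ℕ) :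
    dyadicInterval T (n + 1) j ⊆ dyadicInterval T n ((j + 1) / 2) := by
  have hj : (j : ℝ) ≤ 2 * ((j + 1) / 2 : ℕ) ∧ 2 * ((j + 1) / 2 : ℕ) ≤ (j : ℝ) + 1 := by
    constructor <;> norm_cast <;> omega
  have hu : 0 ≤ T / 2 ^ (n + 1) := by positivity
  rw [dyadicInterval_eq, dyadicInterval_eq, div_two_pow_succ T n]
  exact Icc_subset_Icc (by nlinarith) (by nlinarith)

theorem dyadicInterval_subset_of_not_disjoint (hT : 0 < T) {n n' i j : ℕ} (hn : n ≤ n')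
    (h : ¬ Disjoint (interior (dyadicInterval T n i)) (interior (dyadicInterval T n' j))) :
    dyadicInterval T n' j ⊆ dyadicInterval T n i := by
  obtain ⟨e, rfl⟩ := Nat.exists_eq_add_of_le hn
  obtain ⟨x, hxi, hxj⟩ := not_disjoint_iff.1 h
  simp only [dyadicInterval_eq, interior_Icc, mem_Ioo] at hxi hxj
  set v := T / 2 ^ (n + e)
  have hv : 0 < v := by positivity
  have hu : T / 2 ^ n = 2 ^ e * v := by simp only [v, pow_add]; field_simp
  rw [hu] at hxi
  have hlo : ((i : ℤ) - 1) * 2 ^ e < j := by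
    have : ((i : ℝ) - 1) * 2 ^ e < j := lt_of_mul_lt_mul_right (by linarith) hv.le
    exact_mod_cast this
  have hhi : (j : ℤ) - 1 < i * 2 ^ e := by
    have : (j : ℝ) - 1 < i * 2 ^ e := lt_of_mul_lt_mul_right (by linarith) hv.le
    exact_mod_cast this
  have hlo' : ((i : ℝ) - 1) * 2 ^ e ≤ j - 1 := by exact_mod_cast Int.le_sub_one_of_lt hlo
  have hhi' : (j : ℝ) ≤ i * 2 ^ e := by exact_mod_cast Int.le_of_sub_one_lt hhi
  rw [dyadicInterval_eq, dyadicInterval_eq, hu]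
  exact Icc_subset_Icc (by nlinarith) (by nlinarith)

theorem eq_of_not_disjoint_interior_dyadicInterval (hT : 0 < T) {n i j : ℕ}
    (h : ¬ Disjoint (interior (dyadicInterval T n i)) (interior (dyadicInterval T n j))) :
    i = j := by
  have hij := dyadicInterval_subset_of_not_disjoint hT le_rfl h
  have hji := dyadicInterval_subset_of_not_disjoint hT le_rfl (fun hd => h hd.symm)
  have hu : 0 < T / 2 ^ n := by positivity
  have h1 := hji (right_mem_dyadicInterval hT.le n i)
  have h2 := hij (right_mem_dyadicInterval hT.le n j)
  rw [dyadicInterval_eq] at h1 h2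
  exact_mod_cast le_antisymm (le_of_mul_le_mul_right h1.2 hu) (le_of_mul_le_mul_right h2.2 hu)

theorem dyadicInterval_parent_subset_Icc (hT : 0 ≤ T) {n a b c : ℕ} (hab : a < b) (hbc : b < c) :
    dyadicInterval T n ((b + 1) / 2) ⊆
      Icc ((a - 1) * (T / 2 ^ (n + 1))) (c * (T / 2 ^ (n + 1))) := by
  have hk : (a : ℝ) + 1 ≤ 2 * ((b + 1) / 2 : ℕ) ∧ 2 * ((b + 1) / 2 : ℕ) ≤ (c : ℝ) := by
    constructor <;> norm_cast <;> omega
  have hu : 0 ≤ T / 2 ^ (n + 1) := by positivity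
  rw [dyadicInterval_eq, div_two_pow_succ T n]
  exact Icc_subset_Icc (by nlinarith) (by nlinarith)

theorem mem_dyadicInterval_floor (hT : 0 < T) {x : ℝ} (hx : 0 ≤ x) (n : ℕ) :
    x ∈ dyadicInterval T n (⌊x / (T / 2 ^ n)⌋₊ + 1) := by
  have hu : 0 < T / 2 ^ n := by positivity
  rw [dyadicInterval_eq]
  push_cast
  constructor
  · rw [add_sub_cancel_right, ← le_div_iff₀ hu]
    exact Nat.floor_le (by positivity)
  · rw [← div_le_iff₀ hu]
    exact (Nat.lt_floor_add_one _).le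

theorem dyadicInterval_subset_Icc_of_mem {x : ℝ} {n i : ℕ}
    (hx : x ∈ dyadicInterval T n i) :
    dyadicInterval T n i ⊆ Icc (x - T / 2 ^ n) (x + T / 2 ^ n) := by
  rw [dyadicInterval_eq] at hx ⊢
  exact Icc_subset_Icc (by linarith [hx.2]) (by linarith [hx.1])

theorem div_two_pow_le_sub_of_dyadicInterval_subset (hT : 0 ≤ T) {s t : ℝ} {n i : ℕ}
    (h : dyadicInterval T n i ⊆ Icc s t) : T / 2 ^ n ≤ t - s := by
  have h1 := (h (left_mem_dyadicInterval hT n i)).1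
  have h2 := (h (right_mem_dyadicInterval hT n i)).2
  linarith

theorem index_mem_Icc_of_dyadicInterval_subset (hT : 0 < T) {n i : ℕ}
    (h : dyadicInterval T n i ⊆ Icc 0 T) : 1 ≤ i ∧ i ≤ 2 ^ n := by
  have hu : 0 < T / 2 ^ n := by positivity
  have h1 := (h (left_mem_dyadicInterval hT.le n i)).1
  have h2 := (h (right_mem_dyadicInterval hT.le n i)).2
  have h1' : (1 : ℝ) ≤ i := by nlinarith
  have h2' : (i : ℝ) ≤ 2 ^ n := by
    rw [mul_div_assoc', div_le_iff₀ (by positivity), mul_comm T] at h2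
    exact le_of_mul_le_mul_right h2 hT
  exact ⟨by exact_mod_cast h1', by exact_mod_cast h2'⟩

theorem exists_one_le_div_two_pow_le (T : ℝ) {ε : ℝ} (hε : 0 < ε) :
    ∃ n : ℕ, 1 ≤ n ∧ T / 2 ^ n ≤ ε := by
  have := tendsto_const_nhds (x := T) |>.div_atTop (tendsto_pow_atTop_atTop_of_one_lt one_lt_two)
  exact ((this.eventually (Iic_mem_nhds hε)).and (eventually_ge_atTop 1)).exists.imp
    fun _ h => ⟨h.2, h.1⟩

end

/-- `(p.1 - 1, (p.2 + 1) / 2)` indexes the parent of the dyadic interval indexed by `p`. -/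
def IsMaximalDyadic (T : ℝ) (S : Set ℝ) (p : ℕ × ℕ) : Prop :=
  1 ≤ p.1 ∧ dyadicInterval T p.1 p.2 ⊆ S ∧
    (1 < p.1 → ¬ dyadicInterval T (p.1 - 1) ((p.2 + 1) / 2) ⊆ S)

namespace IsMaximalDyadic

variable {T : ℝ} {S : Set ℝ}

theorem eq_of_not_disjoint (hT : 0 < T) {p q : ℕ × ℕ} (hp : IsMaximalDyadic T S p)
    (hq : IsMaximalDyadic T S q) (hpq : p.1 ≤ q.1)
    (h : ¬ Disjoint (interior (dyadicInterval T p.1 p.2))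
      (interior (dyadicInterval T q.1 q.2))) : p = q := by
  obtain ⟨n, i⟩ := p
  obtain ⟨n', j⟩ := q
  simp only at hpq h ⊢
  rcases hpq.eq_or_lt with rfl | hlt
  · rw [eq_of_not_disjoint_interior_dyadicInterval hT h]
  · obtain ⟨k, rfl⟩ : ∃ k, n' = k + 1 := ⟨n' - 1, by omega⟩
    have hpar := dyadicInterval_subset_parent hT.le k j
    have h' : ¬ Disjoint (interior (dyadicInterval T n i))
        (interior (dyadicInterval T k ((j + 1) / 2))) :=
      fun hd => h (hd.mono_right (interior_mono hpar))
    refine (hq.2.2 (by have := hp.1; dsimp only at this ⊢; omega) ?_).elim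
    simpa using (dyadicInterval_subset_of_not_disjoint hT (by omega) h').trans hp.2.1

theorem pairwise_disjoint_interior (hT : 0 < T) :
    {p | IsMaximalDyadic T S p}.Pairwise fun p q =>
      Disjoint (interior (dyadicInterval T p.1 p.2)) (interior (dyadicInterval T q.1 q.2)) := by
  intro p hp q hq hne
  by_contra h
  rcases le_total p.1 q.1 with hpq | hqp
  · exact hne (eq_of_not_disjoint hT hp hq hpq h)
  · exact hne (eq_of_not_disjoint hT hq hp hqp (fun hd => h hd.symm)).symm

theorem mem_biUnion_of_mem_interior (hT : 0 < T) {x : ℝ} (hx0 : 0 ≤ x) (hx : x ∈ interior S) :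
    x ∈ ⋃ p ∈ {p | IsMaximalDyadic T S p}, dyadicInterval T p.1 p.2 := by
  classical
  obtain ⟨ε, hε, hxS⟩ := Metric.nhds_basis_closedBall.mem_iff.1 (mem_interior_iff_mem_nhds.1 hx)
  rw [Real.closedBall_eq_Icc] at hxS
  have hP : ∃ k, 1 ≤ k ∧ ∃ i, x ∈ dyadicInterval T k i ∧ dyadicInterval T k i ⊆ S := by
    obtain ⟨k, hk1, hkε⟩ := exists_one_le_div_two_pow_le T hε
    have hxk := mem_dyadicInterval_floor hT hx0 k
    exact ⟨k, hk1, _, hxk, (dyadicInterval_subset_Icc_of_mem hxk).trans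
      ((Icc_subset_Icc (by linarith) (by linarith)).trans hxS)⟩
  obtain ⟨hk1, i, hxi, hiS⟩ := Nat.find_spec hP
  have hmin : ∀ k < Nat.find hP, ¬ _ := fun k => Nat.find_min hP
  generalize Nat.find hP = k₀ at hk1 hxi hiS hmin
  refine mem_biUnion (x := (k₀, i)) ⟨hk1, hiS, fun hk hpar => ?_⟩ hxi
  obtain ⟨k, rfl⟩ : ∃ k, k₀ = k + 1 := ⟨k₀ - 1, by omega⟩
  exact hmin k (by omega) ⟨by omega, _, dyadicInterval_subset_parent hT.le k i hxi, by simpa using hpar⟩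

theorem encard_level_le_two (hT : 0 < T) [OrdConnected S] (hS : S ⊆ Icc 0 T) (n : ℕ) :
    {p ∈ {p | IsMaximalDyadic T S p} | p.1 = n}.encard ≤ 2 := by
  have hinj : InjOn Prod.snd {p ∈ {p | IsMaximalDyadic T S p} | p.1 = n} :=
    fun p hp q hq h => Prod.ext (hp.2.trans hq.2.symm) h
  rw [← hinj.encard_image]
  apply encard_le_two_of_forall_not_lt_lt
  rintro _ ⟨⟨_, a⟩, ⟨ha, hna⟩, rfl⟩ _ ⟨⟨_, b⟩, ⟨hb, hnb⟩, rfl⟩ _ ⟨⟨_, c⟩, ⟨hc, hnc⟩, rfl⟩ hab hbc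
  dsimp only at hna hnb hnc hab hbc
  rw [hna] at ha
  rw [hnb] at hb
  rw [hnc] at hc
  rcases hb.1.eq_or_lt with rfl | hn
  · have ha1 := (index_mem_Icc_of_dyadicInterval_subset hT (ha.2.1.trans hS)).1
    have hc2 := (index_mem_Icc_of_dyadicInterval_subset hT (hc.2.1.trans hS)).2
    norm_num at hc2
    omega
  · apply hb.2.2 hn
    obtain ⟨k, rfl⟩ : ∃ k, n = k + 1 := ⟨n - 1, by omega⟩
    exact (dyadicInterval_parent_subset_Icc hT.le hab hbc).trans
      (S.Icc_subset (ha.2.1 (left_mem_dyadicInterval hT.le _ a))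
        (hc.2.1 (right_mem_dyadicInterval hT.le _ c)))

end IsMaximalDyadic

theorem dyadic_covering_general (T δ s t : ℝ) (hT : 0 < T) (hδ0 : 0 < δ)
    (hs : 0 ≤ s) (htT : t ≤ T) (hlen : t - s ≤ δ) :
    ∃ 𝒞 : Set (ℕ × ℕ),
      (∀ p ∈ 𝒞, 1 ≤ p.1 ∧ 1 ≤ p.2 ∧ p.2 ≤ 2 ^ p.1) ∧
      Set.Ioo s t ⊆ ⋃ p ∈ 𝒞, dyadicInterval T p.1 p.2 ∧
      (⋃ p ∈ 𝒞, dyadicInterval T p.1 p.2) ⊆ Set.Icc s t ∧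
      (𝒞.Pairwise fun p q =>
        Disjoint (interior (dyadicInterval T p.1 p.2))
          (interior (dyadicInterval T q.1 q.2))) ∧
      ∃ m : ℕ, 1 ≤ m ∧ 2 ^ (-(m : ℤ)) * T ≤ δ ∧
        (∀ p ∈ 𝒞, m ≤ p.1) ∧
        ∀ i : ℕ, ({p ∈ 𝒞 | p.1 = i} : Set (ℕ × ℕ)).encard ≤ 2 := by
  have hst : Icc s t ⊆ Icc 0 T := Icc_subset_Icc hs htT
  have hm : ∃ m : ℕ, 1 ≤ m ∧ T / 2 ^ m ≤ δ := exists_one_le_div_two_pow_le T hδ0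
  refine ⟨{p | IsMaximalDyadic T (Icc s t) p},
    fun p hp => ⟨hp.1, index_mem_Icc_of_dyadicInterval_subset hT (hp.2.1.trans hst)⟩,
    fun x hx => IsMaximalDyadic.mem_biUnion_of_mem_interior hT (hs.trans hx.1.le)
      (by rwa [interior_Icc]),
    iUnion₂_subset fun p hp => hp.2.1, IsMaximalDyadic.pairwise_disjoint_interior hT,
    Nat.find hm, (Nat.find_spec hm).1, ?_, fun p hp => Nat.find_min' hm
      ⟨hp.1, (div_two_pow_le_sub_of_dyadicInterval_subset hT.le hp.2.1).trans hlen⟩,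
    IsMaximalDyadic.encard_level_le_two hT hst⟩
  rw [zpow_neg_natCast_mul_eq_div]
  exact (Nat.find_spec hm).2

/-- Dyadic covering lemma: for every `T > 0`, `δ ∈ (0,T]` and interval
`[s,t] ⊆ [0,T]` with `t - s ≤ δ`, the open interval `(s,t)` can be covered, without
covering any points outside `[s,t]`, by dyadic intervals with pairwise disjoint
interiors such that, for some `m ≥ 1` with `2⁻ᵐ T ≤ δ`, all the dyadic intervals used
have length at most `2⁻ᵐ T` and at most two of them have length `2⁻ⁱ T` for each
`i ≥ m`. -/
theorem dyadic_covering (T δ s t : ℝ) (hT : 0 < T) (hδ0 : 0 < δ) (hδT : δ ≤ T)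
    (hs : 0 ≤ s) (hst : s ≤ t) (htT : t ≤ T) (hlen : t - s ≤ δ) :
    ∃ 𝒞 : Set (ℕ × ℕ),
      (∀ p ∈ 𝒞, 1 ≤ p.1 ∧ 1 ≤ p.2 ∧ p.2 ≤ 2 ^ p.1) ∧
      Set.Ioo s t ⊆ ⋃ p ∈ 𝒞, dyadicInterval T p.1 p.2 ∧
      (⋃ p ∈ 𝒞, dyadicInterval T p.1 p.2) ⊆ Set.Icc s t ∧
      (𝒞.Pairwise fun p q =>
        Disjoint (interior (dyadicInterval T p.1 p.2))
          (interior (dyadicInterval T q.1 q.2))) ∧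
      ∃ m : ℕ, 1 ≤ m ∧ 2 ^ (-(m : ℤ)) * T ≤ δ ∧
        (∀ p ∈ 𝒞, m ≤ p.1) ∧
        ∀ i : ℕ, ({p ∈ 𝒞 | p.1 = i} : Set (ℕ × ℕ)).encard ≤ 2 :=
  dyadic_covering_general T δ s t hT hδ0 hs htT hlen
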